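/- arXiv:1305.3671 — 7 statements merged into one kernel-verified Lean document; each statement's English description precedes it below -/
import Mathlib

section
/- For every constant β > 0, the redundancy of S^β relative to the i.i.d. class satisfies the exact identity R_S^β(x_{1:n}) = CL_w(𝒜) − m·ln β + Σ_{j∈𝒜} ln(n_j^{n_j}/Γ(n_j)) + ln( Γ(n+β) / (n^n · Γ(β)) ). -/
open Finset Real Filter

variable {𝒳 : Type*} [Fintype 𝒳] [DecidableEq 𝒳]

/-- `n_i^t`: number of occurrences of symbol `i` among the first `t` symbols
`x 0, …, x (t-1)` (the paper's `x_1, …, x_t`). -/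
def cnt (x : ℕ → 𝒳) (i : 𝒳) (t : ℕ) : ℕ :=
  ((Finset.range t).filter fun τ => x τ = i).card

/-- `𝒜_t`: the set of symbols occurring among the first `t` symbols. -/
def alph (x : ℕ → 𝒳) (t : ℕ) : Finset 𝒳 := (Finset.range t).image x

/-- Predictive probability `S^{β⃗}(x_{t+1} = i | x_{1:t})`. -/
noncomputable def Spred (x : ℕ → 𝒳) (w : ℕ → 𝒳 → ℝ) (β : ℕ → ℝ) (t : ℕ) (i : 𝒳) : ℝ :=
  if 0 < cnt x i t then (cnt x i t : ℝ) / (t + β t) else β t * w t i / (t + β t)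

/-- Joint probability `S^{β⃗}(x_{1:n})`. -/
noncomputable def Sjoint (x : ℕ → 𝒳) (w : ℕ → 𝒳 → ℝ) (β : ℕ → ℝ) (n : ℕ) : ℝ :=
  ∏ t ∈ Finset.range n, Spred x w β t (x t)

/-- `𝒩`: the set of times `t ∈ {0,…,n-1}` at which a new symbol occurs. -/
def newTimes (x : ℕ → 𝒳) (n : ℕ) : Finset ℕ :=
  (Finset.range n).filter fun t => x t ∉ alph x t

/-- `CL_w(𝒜)`: code length of the used alphabet. -/
noncomputable def CLw (x : ℕ → 𝒳) (w : ℕ → 𝒳 → ℝ) (n : ℕ) : ℝ :=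
  ∑ t ∈ newTimes x n, Real.log (1 / w t (x t))

/-- Redundancy `R_S^{β⃗}(x_{1:n}) = ln(n^{-n} ∏_{j∈𝒜} n_j^{n_j}) - ln S^{β⃗}(x_{1:n})`. -/
noncomputable def Red (x : ℕ → 𝒳) (w : ℕ → 𝒳 → ℝ) (β : ℕ → ℝ) (n : ℕ) : ℝ :=
  Real.log (((n : ℝ) ^ n)⁻¹ * ∏ j ∈ alph x n, (cnt x j n : ℝ) ^ cnt x j n)
    - Real.log (Sjoint x w β n)

set_option linter.unusedSectionVars false

lemma cnt_succ (x : ℕ → 𝒳) (i : 𝒳) (t : ℕ) :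
    cnt x i (t+1) = cnt x i t + if x t = i then 1 else 0 := by
  unfold cnt
  rw [Finset.range_add_one, Finset.filter_insert]
  split
  · rw [Finset.card_insert_of_notMem (by simp)]
  · simp

lemma alph_succ (x : ℕ → 𝒳) (t : ℕ) : alph x (t+1) = insert (x t) (alph x t) := by
  simp [alph, Finset.range_add_one]

lemma mem_alph (x : ℕ → 𝒳) (j : 𝒳) (t : ℕ) : j ∈ alph x t ↔ 0 < cnt x j t := by
  simp [alph, cnt, Finset.card_pos, Finset.filter_nonempty_iff, eq_comm]

lemma sum_cnt (x : ℕ → 𝒳) (g : 𝒳 → ℕ → ℝ) : ∀ n : ℕ,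
    ∑ t ∈ Finset.range n, g (x t) (cnt x (x t) t)
      = ∑ j ∈ alph x n, ∑ k ∈ Finset.range (cnt x j n), g j k
  | 0 => by simp [alph]
  | n+1 => by
    rw [Finset.sum_range_succ, sum_cnt x g n, alph_succ]
    by_cases h : x n ∈ alph x n
    · rw [Finset.insert_eq_self.2 h]
      have hcong : ∀ j ∈ alph x n, (∑ k ∈ Finset.range (cnt x j (n+1)), g j k)
          = (∑ k ∈ Finset.range (cnt x j n), g j k)
            + if x n = j then g j (cnt x j n) else 0 := by
        intro j _
        rw [cnt_succ]
        split
        · next hj => subst hj; rw [Finset.sum_range_succ]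
        · simp
      rw [Finset.sum_congr rfl hcong, Finset.sum_add_distrib]
      congr 1
      rw [Finset.sum_ite_eq (alph x n) (x n) (fun j => g j (cnt x j n)), if_pos h]
    · have h0 : cnt x (x n) n = 0 := by
        by_contra hc
        exact h ((mem_alph x (x n) n).2 (Nat.pos_of_ne_zero hc))
      rw [Finset.sum_insert h]
      have hj : ∀ j ∈ alph x n, (∑ k ∈ Finset.range (cnt x j (n+1)), g j k)
          = ∑ k ∈ Finset.range (cnt x j n), g j k := by
        intro j hjm
        rw [cnt_succ, if_neg (by rintro rfl; exact h hjm), Nat.add_zero]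
      rw [Finset.sum_congr rfl hj, cnt_succ, h0, if_pos rfl]
      simp [add_comm]

lemma log_gamma_sum (β : ℝ) (hβ : 0 < β) : ∀ n : ℕ,
    Real.log (Real.Gamma (n + β))
      = (∑ t ∈ Finset.range n, Real.log (t + β)) + Real.log (Real.Gamma β)
  | 0 => by simp
  | n+1 => by
    have h1 : ((n:ℕ) + 1 : ℝ) + β = ((n:ℝ) + β) + 1 := by ring
    have hpos : (0:ℝ) < (n:ℝ) + β := by positivity
    push_cast
    rw [h1, Real.Gamma_add_one hpos.ne',
      Real.log_mul hpos.ne' (Real.Gamma_pos_of_pos hpos).ne',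
      Finset.sum_range_succ, log_gamma_sum β hβ n]
    push_cast
    ring

lemma sum_log_fact : ∀ m : ℕ,
    (∑ k ∈ Finset.range (m+1), if 0 < k then Real.log k else 0)
      = Real.log (Nat.factorial m)
  | 0 => by simp
  | m+1 => by
    rw [Finset.sum_range_succ, sum_log_fact m, if_pos (Nat.succ_pos m),
      ← Real.log_mul (by positivity) (by positivity)]
    congr 1
    push_cast [Nat.factorial_succ]
    ring

lemma sum_log_gamma (m : ℕ) (hm : 0 < m) :
    (∑ k ∈ Finset.range m, if 0 < k then Real.log k else 0)
      = Real.log (Real.Gamma m) := by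
  obtain ⟨s, rfl⟩ := Nat.exists_eq_add_of_lt hm
  simp only [zero_add]
  rw [sum_log_fact s]
  have : ((s + 1 : ℕ) : ℝ) = (s : ℝ) + 1 := by push_cast; ring
  rw [this, Real.Gamma_nat_eq_factorial]

lemma sum_indic (m : ℕ) (hm : 0 < m) :
    (∑ k ∈ Finset.range m, if 0 < k then (0:ℝ) else 1) = 1 := by
  have : ∀ k ∈ Finset.range m, (if 0 < k then (0:ℝ) else 1) = if k = 0 then 1 else 0 := by
    intro k _
    by_cases h : k = 0
    · simp [h]
    · simp [h, Nat.pos_of_ne_zero h]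
  rw [Finset.sum_congr rfl this, Finset.sum_ite_eq' (Finset.range m) 0 (fun _ => (1:ℝ))]
  simp [hm]

/-- exact redundancy representation, Proposition 1, Eq. (7):
`R_S^β = CL_w(𝒜) − m ln β + Σ_{j∈𝒜} ln(n_j^{n_j}/Γ(n_j)) + ln(Γ(n+β)/(n^n Γ(β)))`. -/
theorem red_eq
    (n : ℕ) (hn : 1 ≤ n) (x : ℕ → 𝒳) (w : ℕ → 𝒳 → ℝ)
    (hw : ∀ t i, 0 < w t i)
    (hwsum : ∀ t, ∑ k ∈ Finset.univ \ alph x t, w t k ≤ 1)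
    (β : ℝ) (hβ : 0 < β) :
    Red x w (fun _ => β) n =
      CLw x w n - (alph x n).card * Real.log β
      + ∑ j ∈ alph x n, Real.log ((cnt x j n : ℝ) ^ cnt x j n / Real.Gamma (cnt x j n))
      + Real.log (Real.Gamma (n + β) / ((n : ℝ) ^ n * Real.Gamma β)) := by
  classical
  have hpos : ∀ t, 0 < Spred x w (fun _ => β) t (x t) := by
    intro t
    have htβ : (0:ℝ) < (t:ℝ) + β := by positivity
    simp only [Spred]
    split
    · next hc => exact div_pos (by exact_mod_cast hc) htβ
    · exact div_pos (mul_pos hβ (hw t (x t))) htβ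
  have hlog : Real.log (Sjoint x w (fun _ => β) n)
      = ∑ t ∈ Finset.range n, Real.log (Spred x w (fun _ => β) t (x t)) :=
    Real.log_prod fun t _ => (hpos t).ne'
  have hterm : ∀ t : ℕ, Real.log (Spred x w (fun _ => β) t (x t))
      = ((if 0 < cnt x (x t) t then Real.log (cnt x (x t) t) else 0)
          + (if 0 < cnt x (x t) t then 0 else Real.log β + Real.log (w t (x t))))
        - Real.log ((t:ℝ) + β) := by
    intro t
    have htβ : (0:ℝ) < (t:ℝ) + β := by positivity
    simp only [Spred]
    split
    · next hc =>
      rw [Real.log_div (by exact_mod_cast hc.ne') htβ.ne']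
      ring
    · next hc =>
      rw [Real.log_div (mul_pos hβ (hw t (x t))).ne' htβ.ne',
        Real.log_mul hβ.ne' (hw t (x t)).ne']
      ring
  -- counts / Gamma part
  have h1 : ∑ t ∈ Finset.range n, (if 0 < cnt x (x t) t then Real.log (cnt x (x t) t) else 0)
      = ∑ j ∈ alph x n, ∑ k ∈ Finset.range (cnt x j n), (if 0 < k then Real.log k else 0) :=
    sum_cnt x (fun j k => if 0 < k then Real.log (k : ℝ) else 0) n
  have h1' : ∑ t ∈ Finset.range n, (if 0 < cnt x (x t) t then Real.log (cnt x (x t) t) else 0)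
      = ∑ j ∈ alph x n, Real.log (Real.Gamma (cnt x j n)) := by
    rw [h1]
    exact Finset.sum_congr rfl fun j hj => sum_log_gamma _ ((mem_alph x j n).1 hj)
  -- cardinality part
  have hcard : ∑ t ∈ Finset.range n, (if 0 < cnt x (x t) t then (0:ℝ) else 1)
      = ((alph x n).card : ℝ) := by
    have h := sum_cnt x (fun _ k => if 0 < k then (0:ℝ) else 1) n
    rw [h, Finset.sum_congr rfl fun j hj => sum_indic _ ((mem_alph x j n).1 hj)]
    simp
  -- new-times part
  have hN : ∑ t ∈ Finset.range n,
        (if 0 < cnt x (x t) t then (0:ℝ) else Real.log β + Real.log (w t (x t)))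
      = ((alph x n).card : ℝ) * Real.log β + ∑ t ∈ newTimes x n, Real.log (w t (x t)) := by
    have e1 : ∀ t ∈ Finset.range n,
        (if 0 < cnt x (x t) t then (0:ℝ) else Real.log β + Real.log (w t (x t)))
        = (if 0 < cnt x (x t) t then (0:ℝ) else 1) * Real.log β
          + (if 0 < cnt x (x t) t then (0:ℝ) else Real.log (w t (x t))) := by
      intro t _; split <;> simp
    rw [Finset.sum_congr rfl e1, Finset.sum_add_distrib, ← Finset.sum_mul, hcard]
    congr 1
    rw [newTimes, Finset.sum_filter]
    apply Finset.sum_congr rfl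
    intro t _
    by_cases h : 0 < cnt x (x t) t <;> simp [h, mem_alph]
  -- Gamma product part
  have hG : ∑ t ∈ Finset.range n, Real.log ((t:ℝ) + β)
      = Real.log (Real.Gamma ((n:ℝ) + β)) - Real.log (Real.Gamma β) := by
    rw [log_gamma_sum β hβ n]; ring
  -- assemble log Sjoint
  have hS : Real.log (Sjoint x w (fun _ => β) n)
      = (∑ j ∈ alph x n, Real.log (Real.Gamma (cnt x j n)))
        + (((alph x n).card : ℝ) * Real.log β + ∑ t ∈ newTimes x n, Real.log (w t (x t)))
        - (Real.log (Real.Gamma ((n:ℝ) + β)) - Real.log (Real.Gamma β)) := by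
    rw [hlog, Finset.sum_congr rfl fun t _ => hterm t, Finset.sum_sub_distrib,
      Finset.sum_add_distrib, h1', hN, hG]
  -- left data term
  have hnpos : (0:ℝ) < (n:ℝ) := by exact_mod_cast hn
  have hcnt_pos : ∀ j ∈ alph x n, (0:ℝ) < (cnt x j n : ℝ) := by
    intro j hj; exact_mod_cast (mem_alph x j n).1 hj
  have hprod_ne : ∀ j ∈ alph x n, ((cnt x j n : ℝ) ^ cnt x j n) ≠ 0 := by
    intro j hj; exact pow_ne_zero _ (hcnt_pos j hj).ne'
  have hL : Real.log (((n:ℝ) ^ n)⁻¹ * ∏ j ∈ alph x n, (cnt x j n : ℝ) ^ cnt x j n)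
      = -Real.log ((n:ℝ) ^ n) + ∑ j ∈ alph x n, Real.log ((cnt x j n : ℝ) ^ cnt x j n) := by
    rw [Real.log_mul (by positivity) (Finset.prod_ne_zero_iff.2 hprod_ne), Real.log_inv,
      Real.log_prod hprod_ne]
  -- right-hand side pieces
  have hCL : CLw x w n = - ∑ t ∈ newTimes x n, Real.log (w t (x t)) := by
    unfold CLw
    rw [← Finset.sum_neg_distrib]
    exact Finset.sum_congr rfl fun t _ => by
      rw [one_div, Real.log_inv]
  have hRS : ∑ j ∈ alph x n, Real.log ((cnt x j n : ℝ) ^ cnt x j n / Real.Gamma (cnt x j n))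
      = ∑ j ∈ alph x n, Real.log ((cnt x j n : ℝ) ^ cnt x j n)
        - ∑ j ∈ alph x n, Real.log (Real.Gamma (cnt x j n)) := by
    rw [← Finset.sum_sub_distrib]
    exact Finset.sum_congr rfl fun j hj =>
      Real.log_div (hprod_ne j hj) (Real.Gamma_pos_of_pos (hcnt_pos j hj)).ne'
  have hlast : Real.log (Real.Gamma ((n:ℝ) + β) / ((n:ℝ) ^ n * Real.Gamma β))
      = Real.log (Real.Gamma ((n:ℝ) + β)) - (Real.log ((n:ℝ) ^ n) + Real.log (Real.Gamma β)) := by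
    have hg : (0:ℝ) < Real.Gamma ((n:ℝ) + β) := Real.Gamma_pos_of_pos (by positivity)
    rw [Real.log_div hg.ne' (by positivity), Real.log_mul (by positivity) (Real.Gamma_pos_of_pos hβ).ne']
  unfold Red
  rw [hL, hS, hCL, hRS, hlast]
  ring
end

section
/- Define c : (0,1) → ℝ by c(ν) = ν·g^{−1}(ν) / ln(1/ν), where g^{−1} is the inverse of the strictly decreasing bijection g(z) = ln(1+z)/z from (0,∞) onto (0,1). Then c is strictly monotone increasing on (0,1), with lim_{ν→0+} c(ν) = 1 and lim_{ν→1−} c(ν) = 2; in particular 1 < c(ν) < 2 for all ν ∈ (0,1). -/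
open Filter

open Real Set

noncomputable def psiF (w : ℝ) : ℝ := Real.log (Real.exp w - 1) - Real.log w
noncomputable def phiF (w : ℝ) : ℝ := w / psiF w
noncomputable def DF (w : ℝ) : ℝ := w * Real.exp w / (Real.exp w - 1) - 1 - psiF w
noncomputable def hF (w : ℝ) : ℝ := w / (Real.exp w - 1)

lemma lt_exp_sub_one {w : ℝ} (hw : 0 < w) : w < Real.exp w - 1 := by
  have := Real.add_one_lt_exp hw.ne'; linarith

lemma exp_sub_one_pos {w : ℝ} (hw : 0 < w) : 0 < Real.exp w - 1 :=
  hw.trans (lt_exp_sub_one hw)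

lemma key_sinh {w : ℝ} (hw : 0 < w) : w * Real.exp (w/2) < Real.exp w - 1 := by
  have h1 : w/2 < Real.sinh (w/2) := self_lt_sinh_iff.2 (by linarith)
  rw [Real.sinh_eq] at h1
  have h2 : (0:ℝ) < Real.exp (w/2) := Real.exp_pos _
  have h3 : Real.exp (w/2) * Real.exp (w/2) = Real.exp w := by
    rw [← Real.exp_add]; ring_nf
  have h4 : Real.exp (-(w/2)) * Real.exp (w/2) = 1 := by
    rw [← Real.exp_add]; simp
  nlinarith [h1, h2]

lemma key_B {w : ℝ} (hw : 0 < w) : Real.exp w - 1 < w * Real.exp w := by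
  have h1 := Real.add_one_lt_exp (show -w ≠ 0 by linarith)
  have h2 : Real.exp (-w) * Real.exp w = 1 := by rw [← Real.exp_add]; simp
  nlinarith [Real.exp_pos w]

lemma psiF_pos {w : ℝ} (hw : 0 < w) : 0 < psiF w := by
  have := Real.log_lt_log hw (lt_exp_sub_one hw)
  simp only [psiF]; linarith

lemma hasDerivAt_psiF {w : ℝ} (hw : 0 < w) :
    HasDerivAt psiF (Real.exp w / (Real.exp w - 1) - 1/w) w := by
  have h1 : HasDerivAt (fun x => Real.exp x - 1) (Real.exp w) w :=
    (Real.hasDerivAt_exp w).sub_const 1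
  have h2 := h1.log (exp_sub_one_pos hw).ne'
  have h3 := Real.hasDerivAt_log hw.ne'
  have := h2.sub h3
  exact this.congr_deriv (by rw [one_div])

lemma hasDerivAt_DF {w : ℝ} (hw : 0 < w) :
    HasDerivAt DF (1/w - w * Real.exp w / (Real.exp w - 1)^2) w := by
  have he := Real.hasDerivAt_exp w
  have h1 : HasDerivAt (fun x => x * Real.exp x) (Real.exp w + w * Real.exp w) w := by
    exact ((hasDerivAt_id w).mul he).congr_deriv (by simp)
  have h2 : HasDerivAt (fun x => Real.exp x - 1) (Real.exp w) w := he.sub_const 1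
  have h3 := h1.div h2 (exp_sub_one_pos hw).ne'
  have h4 := (h3.sub_const 1).sub (hasDerivAt_psiF hw)
  refine h4.congr_deriv ?_
  have hne := (exp_sub_one_pos hw).ne'
  field_simp
  ring

lemma hasDerivAt_phiF {w : ℝ} (hw : 0 < w) :
    HasDerivAt phiF (-DF w / (psiF w)^2) w := by
  have h1 := (hasDerivAt_id w).div (hasDerivAt_psiF hw) (psiF_pos hw).ne'
  refine h1.congr_deriv ?_
  have hψ := (psiF_pos hw).ne'
  simp only [DF, id]
  field_simp
  ring

lemma hasDerivAt_hF {w : ℝ} (hw : 0 < w) :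
    HasDerivAt (fun w => w / (Real.exp w - 1))
      (((Real.exp w - 1) - w * Real.exp w) / (Real.exp w - 1)^2) w := by
  have h2 : HasDerivAt (fun x => Real.exp x - 1) (Real.exp w) w :=
    (Real.hasDerivAt_exp w).sub_const 1
  have := (hasDerivAt_id w).div h2 (exp_sub_one_pos hw).ne'
  exact this.congr_deriv (by simp)

lemma tendsto_DF_zero : Tendsto DF (nhdsWithin 0 (Set.Ioi 0)) (nhds 0) := by
  have hslope : Tendsto (fun w : ℝ => (Real.exp w - 1) / w) (nhdsWithin 0 (Set.Ioi 0)) (nhds 1) := by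
    have h := Real.hasDerivAt_exp 0
    have h2 := (hasDerivAt_iff_tendsto_slope.1 h)
    have h3 : Tendsto (slope Real.exp 0) (nhdsWithin 0 (Set.Ioi 0)) (nhds (Real.exp 0)) :=
      h2.mono_left (nhdsWithin_mono 0 (fun x hx => ne_of_gt hx))
    simp only [slope_def_field, Real.exp_zero] at h3 ⊢
    refine h3.congr' ?_
    filter_upwards [self_mem_nhdsWithin] with w hw
    rw [slope_def_field]
    norm_num
  have hpos : ∀ᶠ w in nhdsWithin (0:ℝ) (Set.Ioi 0), (0:ℝ) < w := self_mem_nhdsWithin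
  have h1 : Tendsto (fun w : ℝ => w * Real.exp w / (Real.exp w - 1))
      (nhdsWithin 0 (Set.Ioi 0)) (nhds 1) := by
    have hexp : Tendsto (fun w : ℝ => Real.exp w) (nhdsWithin 0 (Set.Ioi 0)) (nhds 1) := by
      simpa using (Real.continuous_exp.tendsto 0).mono_left nhdsWithin_le_nhds
    have := hexp.div hslope one_ne_zero
    simp only [div_one] at this
    refine this.congr' ?_
    filter_upwards [hpos] with w hw
    have h5 := (exp_sub_one_pos hw).ne'
    simp only [Pi.div_apply]
    field_simp
  have h2 : Tendsto psiF (nhdsWithin 0 (Set.Ioi 0)) (nhds 0) := by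
    have : Tendsto (fun w : ℝ => Real.log ((Real.exp w - 1) / w))
        (nhdsWithin 0 (Set.Ioi 0)) (nhds 0) := by
      have := (Real.continuousAt_log one_ne_zero).tendsto.comp hslope
      simpa [Function.comp_def] using this
    refine this.congr' ?_
    filter_upwards [hpos] with w hw
    rw [Real.log_div (exp_sub_one_pos hw).ne' hw.ne', psiF]
  have := (h1.sub_const 1).sub h2
  show Tendsto (fun w => w * Real.exp w / (Real.exp w - 1) - 1 - psiF w) _ (nhds 0)
  simpa [DF] using this

lemma deriv_DF_pos {w : ℝ} (hw : 0 < w) : 0 < 1/w - w * Real.exp w / (Real.exp w - 1)^2 := by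
  have hs := key_sinh hw
  have h3 : Real.exp (w/2) * Real.exp (w/2) = Real.exp w := by
    rw [← Real.exp_add]; ring_nf
  have hpos := exp_sub_one_pos hw
  have h4 : w^2 * Real.exp w < (Real.exp w - 1)^2 := by
    nlinarith [Real.exp_pos (w/2), mul_pos hw (Real.exp_pos (w/2))]
  rw [sub_pos, div_lt_div_iff₀ (by positivity) hw]
  nlinarith

lemma strictMonoOn_DF : StrictMonoOn DF (Set.Ioi 0) := by
  refine strictMonoOn_of_deriv_pos (convex_Ioi 0) ?_ ?_
  · exact fun x hx => ((hasDerivAt_DF hx).differentiableAt.continuousAt).continuousWithinAt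
  · intro x hx
    rw [interior_Ioi] at hx
    rw [(hasDerivAt_DF hx).deriv]
    exact deriv_DF_pos hx

lemma DF_pos {w : ℝ} (hw : 0 < w) : 0 < DF w := by
  have h1 : DF (w/2) < DF w := strictMonoOn_DF (by simp [hw] : w/2 ∈ Set.Ioi (0:ℝ))
    (Set.mem_Ioi.2 hw) (by linarith)
  have h2 : 0 ≤ DF (w/2) := by
    refine le_of_tendsto tendsto_DF_zero ?_
    filter_upwards [Ioo_mem_nhdsGT (by linarith : (0:ℝ) < w/2)] with t ht
    exact (strictMonoOn_DF ht.1 (by simp [hw, ht] : w/2 ∈ Set.Ioi (0:ℝ)) ht.2).le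
  linarith

lemma strictAntiOn_phiF : StrictAntiOn phiF (Set.Ioi 0) := by
  refine strictAntiOn_of_deriv_neg (convex_Ioi 0) ?_ ?_
  · exact fun x hx => ((hasDerivAt_phiF hx).differentiableAt.continuousAt).continuousWithinAt
  · intro x hx
    rw [interior_Ioi] at hx
    rw [(hasDerivAt_phiF hx).deriv]
    have := DF_pos hx
    have := psiF_pos hx
    have : (0:ℝ) < (psiF x)^2 := by positivity
    rw [div_neg_iff]
    right
    exact ⟨by linarith [DF_pos hx], this⟩

lemma strictAntiOn_hF : StrictAntiOn hF (Set.Ioi 0) := by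
  refine strictAntiOn_of_deriv_neg (convex_Ioi 0) ?_ ?_
  · exact fun x hx => ((hasDerivAt_hF hx).differentiableAt.continuousAt).continuousWithinAt
  · intro x hx
    rw [interior_Ioi] at hx
    have : deriv hF x = ((Real.exp x - 1) - x * Real.exp x) / (Real.exp x - 1)^2 :=
      HasDerivAt.deriv (by exact hasDerivAt_hF hx)
    rw [this]
    have h1 := key_B hx
    have h2 := exp_sub_one_pos hx
    rw [div_neg_iff]
    right
    exact ⟨by linarith, by positivity⟩

lemma hF_mem {w : ℝ} (hw : 0 < w) : hF w ∈ Set.Ioo (0:ℝ) 1 := by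
  have h1 := exp_sub_one_pos hw
  have h2 := lt_exp_sub_one hw
  constructor
  · exact div_pos hw h1
  · rw [hF, div_lt_one h1]; exact h2

lemma psiF_lt_self {w : ℝ} (hw : 0 < w) : psiF w < w := by
  have h1 := key_B hw
  have h2 := exp_sub_one_pos hw
  have h3 : Real.log (Real.exp w - 1) < Real.log (w * Real.exp w) := Real.log_lt_log h2 h1
  rw [Real.log_mul hw.ne' (Real.exp_pos w).ne', Real.log_exp] at h3
  simp only [psiF]; linarith

lemma half_lt_psiF {w : ℝ} (hw : 0 < w) : w/2 < psiF w := by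
  have h1 := key_sinh hw
  have h2 : Real.log (w * Real.exp (w/2)) < Real.log (Real.exp w - 1) :=
    Real.log_lt_log (by positivity) h1
  rw [Real.log_mul hw.ne' (Real.exp_pos _).ne', Real.log_exp] at h2
  simp only [psiF]; linarith

lemma one_lt_phiF {w : ℝ} (hw : 0 < w) : 1 < phiF w := by
  rw [phiF, lt_div_iff₀ (psiF_pos hw), one_mul]
  exact psiF_lt_self hw

lemma phiF_lt_two {w : ℝ} (hw : 0 < w) : phiF w < 2 := by
  rw [phiF, div_lt_iff₀ (psiF_pos hw)]
  have := half_lt_psiF hw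
  linarith

lemma psiF_le {w : ℝ} (hw : 0 < w) (hw1 : w ≤ 1) : psiF w ≤ w/2 + (2/9) * w^2 := by
  have hb := Real.exp_bound (x := w) (by rw [abs_of_pos hw]; exact hw1) (n := 3) (by norm_num)
  have habs : |w| = w := abs_of_pos hw
  have hsum : ∑ i ∈ Finset.range 3, w ^ i / (Nat.factorial i : ℝ) = 1 + w + w^2/2 := by
    norm_num [Finset.sum_range_succ, Nat.factorial]
    try ring
  rw [hsum, habs] at hb
  have hb2 : Real.exp w ≤ 1 + w + w^2/2 + w^3 * (4/18) := by
    have := abs_le.1 hb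
    have h38 : ((3:ℕ).succ : ℝ) / ((Nat.factorial 3 : ℝ) * 3) = 4/18 := by
      norm_num [Nat.factorial]
    nlinarith [this.2]
  -- psiF w = log((e^w - 1)/w) ≤ (e^w-1)/w - 1 ≤ w/2 + (2/9) w^2
  have hq : (Real.exp w - 1)/w > 0 := div_pos (exp_sub_one_pos hw) hw
  have h1 : psiF w = Real.log ((Real.exp w - 1)/w) := by
    rw [Real.log_div (exp_sub_one_pos hw).ne' hw.ne', psiF]
  rw [h1]
  have h2 := Real.log_le_sub_one_of_pos hq
  have h3 : (Real.exp w - 1)/w - 1 ≤ w/2 + (2/9)*w^2 := by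
    rw [div_sub_one hw.ne', div_le_iff₀ hw]
    nlinarith
  linarith

lemma le_psiF {w : ℝ} (hw : 0 < w) : w/(2+w) ≤ psiF w := by
  have h0 : Real.exp w - 1 > w * (1 + w/2) := by
    have h1 := key_sinh hw
    have h2 : (1:ℝ) + w/2 ≤ Real.exp (w/2) := by
      have := Real.add_one_le_exp (w/2); linarith
    nlinarith
  have h1 : psiF w = Real.log ((Real.exp w - 1)/w) := by
    rw [Real.log_div (exp_sub_one_pos hw).ne' hw.ne', psiF]
  have h2 : (1:ℝ) + w/2 < (Real.exp w - 1)/w := by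
    rw [lt_div_iff₀ hw]; nlinarith
  have h3 : Real.log (1 + w/2) ≤ psiF w := by
    rw [h1]
    exact (Real.log_le_log (by linarith) h2.le)
  -- log(1+w/2) ≥ 1 - 1/(1+w/2) = (w/2)/(1+w/2) = w/(2+w)
  have h4 : (0:ℝ) < 1 + w/2 := by linarith
  have h5 := Real.log_le_sub_one_of_pos (show (0:ℝ) < (1+w/2)⁻¹ by positivity)
  rw [Real.log_inv] at h5
  have h6 : 1 - (1+w/2)⁻¹ ≤ Real.log (1 + w/2) := by linarith
  have h7 : 1 - (1+w/2)⁻¹ = w/(2+w) := by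
    rw [inv_eq_one_div]
    field_simp
    ring
  linarith

lemma tendsto_phiF_zero : Tendsto phiF (nhdsWithin 0 (Set.Ioi 0)) (nhds 2) := by
  have hupper : ∀ᶠ w in nhdsWithin (0:ℝ) (Set.Ioi 0), phiF w ≤ 2 + w := by
    filter_upwards [self_mem_nhdsWithin] with w (hw : 0 < w)
    have h1 := le_psiF hw
    have h2 := psiF_pos hw
    rw [phiF, div_le_iff₀ h2]
    have h3 : w/(2+w) * (2+w) = w := by field_simp
    nlinarith
  have hlower : ∀ᶠ w in nhdsWithin (0:ℝ) (Set.Ioi 0), 1/(1/2 + (2/9)*w) ≤ phiF w := by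
    filter_upwards [Ioo_mem_nhdsGT (show (0:ℝ) < 1 by norm_num)] with w hw
    have h1 := psiF_le hw.1 hw.2.le
    have h2 := psiF_pos hw.1
    have h3 : (0:ℝ) < 1/2 + (2/9)*w := by nlinarith [hw.1]
    rw [phiF, div_le_div_iff₀ h3 h2]
    nlinarith [hw.1]
  have hU : Tendsto (fun w : ℝ => 2 + w) (nhdsWithin 0 (Set.Ioi 0)) (nhds 2) := by
    have : Tendsto (fun w : ℝ => 2 + w) (nhds 0) (nhds 2) := by
      simpa using (tendsto_const_nhds.add tendsto_id : Tendsto (fun w:ℝ => 2+w) (nhds 0) (nhds (2+0)))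
    exact this.mono_left nhdsWithin_le_nhds
  have hL : Tendsto (fun w : ℝ => 1/(1/2 + (2/9)*w)) (nhdsWithin 0 (Set.Ioi 0)) (nhds 2) := by
    have : Tendsto (fun w : ℝ => 1/(1/2 + (2/9)*w)) (nhds 0) (nhds 2) := by
      have h1 : Tendsto (fun w : ℝ => 1/2 + (2/9)*w) (nhds 0) (nhds (1/2)) := by
        simpa using (tendsto_const_nhds.add (tendsto_const_nhds.mul tendsto_id) :
          Tendsto (fun w:ℝ => 1/2 + (2/9)*w) (nhds 0) (nhds (1/2 + (2/9)*0)))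
      have := h1.inv₀ (by norm_num)
      simpa [one_div] using this
    exact this.mono_left nhdsWithin_le_nhds
  exact tendsto_of_tendsto_of_tendsto_of_le_of_le' hL hU hlower hupper

lemma tendsto_phiF_atTop : Tendsto phiF atTop (nhds 1) := by
  have hu : Tendsto (fun w : ℝ => (Real.log 2 + Real.log w)/w) atTop (nhds 0) := by
    have h1 : Tendsto (fun w : ℝ => Real.log 2 / w) atTop (nhds 0) :=
      tendsto_const_nhds.div_atTop tendsto_id
    have h2 : Tendsto (fun w : ℝ => Real.log w / w) atTop (nhds 0) :=
      Real.isLittleO_log_id_atTop.tendsto_div_nhds_zero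
    simpa [add_div] using h1.add h2
  have hupper : ∀ᶠ w in atTop, phiF w ≤ 1/(1 - (Real.log 2 + Real.log w)/w) := by
    filter_upwards [eventually_ge_atTop (1:ℝ), hu.eventually (eventually_lt_nhds (show (0:ℝ)<1/2 by norm_num))]
      with w hw1 hu2
    have hw : (0:ℝ) < w := by linarith
    -- psiF w ≥ w - log 2 - log w
    have h2 : Real.exp w - 1 ≥ Real.exp w / 2 := by
      have : (2:ℝ) ≤ Real.exp w := by
        have h3 := Real.add_one_le_exp (1:ℝ)
        have h4 := Real.exp_le_exp.2 hw1
        linarith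
      linarith
    have h3 : Real.log (Real.exp w / 2) ≤ Real.log (Real.exp w - 1) :=
      Real.log_le_log (by positivity) h2
    rw [Real.log_div (Real.exp_pos w).ne' (by norm_num), Real.log_exp] at h3
    have h4 : w - Real.log 2 - Real.log w ≤ psiF w := by simp only [psiF]; linarith
    have h5 : 0 < w - Real.log 2 - Real.log w := by
      have : (Real.log 2 + Real.log w)/w < 1/2 := hu2
      rw [div_lt_iff₀ hw] at this
      linarith
    have h6 : phiF w ≤ w / (w - Real.log 2 - Real.log w) := by
      rw [phiF]
      exact div_le_div_of_nonneg_left hw.le h5 h4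
    have h7 : w / (w - Real.log 2 - Real.log w) = 1/(1 - (Real.log 2 + Real.log w)/w) := by
      rw [eq_div_iff]
      · field_simp
        ring
      · have : 1 - (Real.log 2 + Real.log w)/w = (w - Real.log 2 - Real.log w)/w := by
          field_simp; ring
        rw [this]
        positivity
    linarith [h7 ▸ h6]
  have hlower : ∀ᶠ w in atTop, (1:ℝ) ≤ phiF w := by
    filter_upwards [eventually_gt_atTop (0:ℝ)] with w hw
    exact (one_lt_phiF hw).le
  have hU : Tendsto (fun w : ℝ => 1/(1 - (Real.log 2 + Real.log w)/w)) atTop (nhds 1) := by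
    have h1 : Tendsto (fun w : ℝ => 1 - (Real.log 2 + Real.log w)/w) atTop (nhds 1) := by
      simpa using tendsto_const_nhds.sub hu
    have := h1.inv₀ (by norm_num)
    simpa [one_div] using this
  exact tendsto_of_tendsto_of_tendsto_of_le_of_le' tendsto_const_nhds hU hlower hupper

lemma hF_lt_rev {a b : ℝ} (ha : 0 < a) (hb : 0 < b) (h : hF a < hF b) : b < a := by
  by_contra h'
  push_neg at h'
  rcases lt_or_eq_of_le h' with h2 | h2
  · have := strictAntiOn_hF (Set.mem_Ioi.2 ha) (Set.mem_Ioi.2 hb) h2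
    linarith
  · rw [h2] at h; linarith

section main
variable (ginv : ℝ → ℝ)

lemma keyfact (hmem : ∀ ν ∈ Set.Ioo (0:ℝ) 1, ginv ν ∈ Set.Ioi (0:ℝ))
    (hinv : ∀ ν ∈ Set.Ioo (0:ℝ) 1, Real.log (1 + ginv ν) / ginv ν = ν)
    {ν : ℝ} (hν : ν ∈ Set.Ioo (0:ℝ) 1) :
    0 < ν * ginv ν ∧ hF (ν * ginv ν) = ν ∧
      ν * ginv ν / Real.log (1 / ν) = phiF (ν * ginv ν) := by
  have hz : 0 < ginv ν := hmem ν hν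
  set z := ginv ν with hzdef
  have hν0 : 0 < ν := hν.1
  have hw : 0 < ν * z := mul_pos hν0 hz
  have hlog : Real.log (1 + z) = ν * z := by
    have := hinv ν hν
    rw [← hzdef, div_eq_iff hz.ne'] at this
    linarith
  have hexp : Real.exp (ν * z) = 1 + z := by
    rw [← hlog, Real.exp_log (by linarith)]
  have h1 : Real.exp (ν * z) - 1 = z := by rw [hexp]; ring
  have hhF : hF (ν * z) = ν := by
    rw [hF, h1, mul_div_assoc, div_self hz.ne', mul_one]
  have hpsi : psiF (ν * z) = Real.log (1 / ν) := by
    rw [psiF, h1, Real.log_mul hν0.ne' hz.ne', one_div, Real.log_inv]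
    ring
  exact ⟨hw, hhF, by rw [hpsi.symm, phiF]⟩

end main

/-- Lemma 3: `c(ν) = ν·g⁻¹(ν)/ln(1/ν)` is strictly increasing
on `(0,1)`, tends to `1` at `0⁺` and to `2` at `1⁻`, and satisfies
`1 < c(ν) < 2` on `(0,1)`. Here `g⁻¹` is the inverse of the strictly decreasing
bijection `g(z) = ln(1+z)/z` from `(0,∞)` onto `(0,1)`. -/
theorem c_strictMono_limits
    (ginv : ℝ → ℝ)
    (hmem : ∀ ν ∈ Set.Ioo (0:ℝ) 1, ginv ν ∈ Set.Ioi (0:ℝ))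
    (hinv : ∀ ν ∈ Set.Ioo (0:ℝ) 1, Real.log (1 + ginv ν) / ginv ν = ν) :
    StrictMonoOn (fun ν : ℝ => ν * ginv ν / Real.log (1 / ν)) (Set.Ioo 0 1) ∧
    Tendsto (fun ν : ℝ => ν * ginv ν / Real.log (1 / ν))
      (nhdsWithin 0 (Set.Ioi 0)) (nhds 1) ∧
    Tendsto (fun ν : ℝ => ν * ginv ν / Real.log (1 / ν))
      (nhdsWithin 1 (Set.Iio 1)) (nhds 2) ∧
    ∀ ν ∈ Set.Ioo (0:ℝ) 1,
      1 < ν * ginv ν / Real.log (1 / ν) ∧ ν * ginv ν / Real.log (1 / ν) < 2 := by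
  have KF : ∀ {ν : ℝ}, ν ∈ Set.Ioo (0:ℝ) 1 → _ := fun {ν} hν => keyfact ginv hmem hinv hν
  -- tendsto of w := ν * ginv ν
  have hW0 : Tendsto (fun ν : ℝ => ν * ginv ν) (nhdsWithin 0 (Set.Ioi 0)) atTop := by
    rw [tendsto_atTop]
    intro M
    set M' := max M 1 with hM'def
    have hM' : (0:ℝ) < M' := lt_of_lt_of_le one_pos (le_max_right M 1)
    have hFM' := hF_mem hM'
    filter_upwards [Ioo_mem_nhdsGT hFM'.1] with ν hν
    have hν1 : ν ∈ Set.Ioo (0:ℝ) 1 := ⟨hν.1, hν.2.trans hFM'.2⟩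
    obtain ⟨hw, hhF, -⟩ := KF hν1
    have : M' < ν * ginv ν := by
      apply hF_lt_rev hw hM'
      rw [hhF]; exact hν.2
    exact le_trans (le_max_left M 1) this.le
  have hW1 : Tendsto (fun ν : ℝ => ν * ginv ν) (nhdsWithin 1 (Set.Iio 1))
      (nhdsWithin 0 (Set.Ioi 0)) := by
    rw [tendsto_nhdsWithin_iff]
    constructor
    · rw [tendsto_order]
      constructor
      · intro a ha
        filter_upwards [Ioo_mem_nhdsLT_of_mem (show (1:ℝ) ∈ Set.Ioc 0 1 by norm_num)]
          with ν hν
        exact lt_of_lt_of_le ha (KF hν).1.le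
      · intro a ha
        set a' := min a 1 with ha'def
        have ha' : (0:ℝ) < a' := lt_min ha one_pos
        have hFa' := hF_mem ha'
        filter_upwards [Ioo_mem_nhdsLT_of_mem
          (show (1:ℝ) ∈ Set.Ioc (hF a') 1 from ⟨hFa'.2, le_refl 1⟩)] with ν hν
        have hν1 : ν ∈ Set.Ioo (0:ℝ) 1 := ⟨lt_trans hFa'.1 hν.1, hν.2⟩
        obtain ⟨hw, hhF, -⟩ := KF hν1
        have : ν * ginv ν < a' := by
          apply hF_lt_rev ha' hw
          rw [hhF]; exact hν.1
        exact lt_of_lt_of_le this (min_le_left a 1)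
    · filter_upwards [Ioo_mem_nhdsLT_of_mem (show (1:ℝ) ∈ Set.Ioc 0 1 by norm_num)]
        with ν hν
      exact (KF hν).1
  have hcongr0 : (fun ν : ℝ => phiF (ν * ginv ν)) =ᶠ[nhdsWithin 0 (Set.Ioi 0)]
      (fun ν : ℝ => ν * ginv ν / Real.log (1 / ν)) := by
    filter_upwards [Ioo_mem_nhdsGT (show (0:ℝ) < 1 by norm_num)] with ν hν
    exact ((KF hν).2.2).symm
  have hcongr1 : (fun ν : ℝ => phiF (ν * ginv ν)) =ᶠ[nhdsWithin 1 (Set.Iio 1)]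
      (fun ν : ℝ => ν * ginv ν / Real.log (1 / ν)) := by
    filter_upwards [Ioo_mem_nhdsLT_of_mem (show (1:ℝ) ∈ Set.Ioc 0 1 by norm_num)] with ν hν
    exact ((KF hν).2.2).symm
  refine ⟨?_, ?_, ?_, ?_⟩
  · intro a ha b hb hab
    obtain ⟨hwa, hhFa, hca⟩ := KF ha
    obtain ⟨hwb, hhFb, hcb⟩ := KF hb
    have hlt : b * ginv b < a * ginv a := by
      apply hF_lt_rev hwa hwb
      rw [hhFa, hhFb]; exact hab
    simp only [hca, hcb]
    exact strictAntiOn_phiF (Set.mem_Ioi.2 hwb) (Set.mem_Ioi.2 hwa) hlt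
  · exact (tendsto_phiF_atTop.comp hW0).congr' hcongr0
  · exact (tendsto_phiF_zero.comp hW1).congr' hcongr1
  · intro ν hν
    obtain ⟨hw, -, hc⟩ := KF hν
    rw [hc]
    exact ⟨one_lt_phiF hw, phiF_lt_two hw⟩
end

section
/- For all real numbers t and m with 0 < m < t, the inequality ln(t/m) − m/t > ln((t+1)/m) − ((m+1)/t) · ln(t/m) / ln((t+1)/(m+1)) holds; equivalently, swapping an old symbol at time t with a new symbol at time t+1 strictly increases the redundancy of the estimator S with variable parameters β*_t = m_t/ln((t+1)/m_t). -/
/-- Appendix D, `f_{t,m}(0) > f_{t,m}(1)`: for reals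
`0 < m < t`,
`ln(t/m) − m/t > ln((t+1)/m) − ((m+1)/t)·ln(t/m)/ln((t+1)/(m+1))`.
Equivalently, swapping an old symbol at time `t` with a new symbol at time
`t+1` strictly increases the redundancy of `S` with variable parameters
`β*_t = m_t/ln((t+1)/m_t)`. -/
theorem swap_increases_redundancy (t m : ℝ) (hm : 0 < m) (hmt : m < t) :
    Real.log (t / m) - m / t >
      Real.log ((t + 1) / m)
        - ((m + 1) / t) * Real.log (t / m) / Real.log ((t + 1) / (m + 1)) := by
  have ht : 0 < t := hm.trans hmt
  have ht1 : 0 < t + 1 := by linarith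
  have hm1 : 0 < m + 1 := by linarith
  rw [Real.log_div ht.ne' hm.ne', Real.log_div ht1.ne' hm.ne',
      Real.log_div ht1.ne' hm1.ne']
  have hL : Real.log m < Real.log t := Real.log_lt_log hm hmt
  have hA : Real.log (m + 1) < Real.log (t + 1) := Real.log_lt_log hm1 (by linarith)
  -- t * (log(t+1) - log t) < 1
  have hb : t * (Real.log (t + 1) - Real.log t) < 1 := by
    have h1 : Real.log ((t + 1) / t) < (t + 1) / t - 1 := by
      refine Real.log_lt_sub_one_of_pos (by positivity) ?_
      intro h
      rw [div_eq_one_iff_eq ht.ne'] at h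
      linarith
    rw [Real.log_div ht1.ne' ht.ne'] at h1
    have h2 : (t + 1) / t - 1 = 1 / t := by field_simp; ring
    rw [h2] at h1
    calc t * (Real.log (t + 1) - Real.log t) < t * (1 / t) := by
          exact (mul_lt_mul_iff_right₀ ht).mpr h1
      _ = 1 := by field_simp
  -- log(t+1) - log t < log(m+1) - log m
  have hab : Real.log (t + 1) - Real.log t < Real.log (m + 1) - Real.log m := by
    have h1 : Real.log ((t + 1) / t) < Real.log ((m + 1) / m) := by
      apply Real.log_lt_log (by positivity)
      rw [div_lt_div_iff₀ ht hm]
      nlinarith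
    rwa [Real.log_div ht1.ne' ht.ne', Real.log_div hm1.ne' hm.ne'] at h1
  have hApos : 0 < Real.log (t + 1) - Real.log (m + 1) := by linarith
  have hLpos : 0 < Real.log t - Real.log m := by linarith
  rw [gt_iff_lt, ← sub_pos]
  have key : 0 < (Real.log t - Real.log m) * (1 - t * (Real.log (t + 1) - Real.log t))
      + ((Real.log (m + 1) - Real.log m) - (Real.log (t + 1) - Real.log t))
        * (t * (Real.log (t + 1) - Real.log t) + m) := by
    have h1 : 0 < (Real.log t - Real.log m) * (1 - t * (Real.log (t + 1) - Real.log t)) :=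
      mul_pos hLpos (by linarith)
    have h2 : 0 ≤ ((Real.log (m + 1) - Real.log m) - (Real.log (t + 1) - Real.log t))
        * (t * (Real.log (t + 1) - Real.log t) + m) := by
      apply le_of_lt
      apply mul_pos (by linarith)
      nlinarith [Real.log_lt_log ht (by linarith : t < t + 1)]
    linarith
  have heq : Real.log t - Real.log m - m / t - (Real.log (t + 1) - Real.log m
      - (m + 1) / t * (Real.log t - Real.log m) / (Real.log (t + 1) - Real.log (m + 1)))
      = ((Real.log t - Real.log m) * (1 - t * (Real.log (t + 1) - Real.log t))
        + ((Real.log (m + 1) - Real.log m) - (Real.log (t + 1) - Real.log t))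
          * (t * (Real.log (t + 1) - Real.log t) + m))
        / (t * (Real.log (t + 1) - Real.log (m + 1))) := by
    field_simp
    ring
  rw [heq]
  positivity
end

section
/- For every real ν̄ > 1, the function f_ν̄(x) = ln(ν̄·(1+x)) − (1/ν̄ + x) · ln ν̄ / ln( (1+x)/(1/ν̄ + x) ) is monotone decreasing in x on (0,∞). -/
open Real Set

/-- Appendix D: for every `ν̄ > 1`, the function
`f_ν̄(x) = ln(ν̄(1+x)) − (1/ν̄ + x)·ln ν̄ / ln((1+x)/(1/ν̄ + x))`
is monotone decreasing on `(0,∞)`. -/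
theorem f_nubar_antitone (ν : ℝ) (hν : 1 < ν) :
    AntitoneOn
      (fun x : ℝ =>
        Real.log (ν * (1 + x)) -
          (1 / ν + x) * Real.log ν / Real.log ((1 + x) / (1 / ν + x)))
      (Set.Ioi 0) := by
  have hν0 : (0:ℝ) < ν := lt_trans one_pos hν
  have hlogν : 0 < Real.log ν := Real.log_pos hν
  set a : ℝ := 1 / ν with ha
  have ha0 : 0 < a := by positivity
  have ha1 : a < 1 := by rw [ha, div_lt_one hν0]; exact hν
  have hkey : ∀ x ∈ Set.Ioi (0:ℝ),
      HasDerivAt (fun x : ℝ =>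
        Real.log (ν * (1 + x)) - (a + x) * Real.log ν / Real.log ((1 + x) / (a + x)))
        (((Real.log ((1+x)/(a+x)))^2
            - Real.log ν * ((1+x) * Real.log ((1+x)/(a+x)) + (1-a)))
          / ((1+x) * (Real.log ((1+x)/(a+x)))^2)) x := by
    intro x hx
    have hx0 : (0:ℝ) < x := hx
    have hp : (0:ℝ) < 1 + x := by linarith
    have hq : (0:ℝ) < a + x := by linarith
    have hpq : a + x < 1 + x := by linarith
    have hL0 : 0 < Real.log ((1+x)/(a+x)) :=
      Real.log_pos ((one_lt_div hq).mpr hpq)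
    have d1 : HasDerivAt (fun x : ℝ => Real.log (ν * (1 + x))) (ν * (0+1) / (ν * (1+x))) x :=
      (((hasDerivAt_const x (1:ℝ)).add (hasDerivAt_id x)).const_mul ν).log
        (by positivity)
    have d2 : HasDerivAt (fun x : ℝ => (1 + x) / (a + x))
        (((0+1) * (a+x) - (1+x) * (0+1)) / (a+x)^2) x :=
      ((hasDerivAt_const x (1:ℝ)).add (hasDerivAt_id x)).div
        ((hasDerivAt_const x a).add (hasDerivAt_id x)) hq.ne'
    have d2' : HasDerivAt (fun x : ℝ => Real.log ((1 + x) / (a + x)))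
        ((((0+1) * (a+x) - (1+x) * (0+1)) / (a+x)^2) / ((1+x)/(a+x))) x :=
      d2.log (by positivity)
    have d3 : HasDerivAt (fun x : ℝ => (a + x) * Real.log ν) ((0+1) * Real.log ν) x :=
      ((hasDerivAt_const x a).add (hasDerivAt_id x)).mul_const _
    have d4 := d3.div d2' hL0.ne'
    have := d1.sub d4
    convert this using 1
    · rfl
    · rfl
    · rfl
    field_simp
    ring
  have hconv : Convex ℝ (Set.Ioi (0:ℝ)) := convex_Ioi 0
  have hint : interior (Set.Ioi (0:ℝ)) = Set.Ioi 0 := interior_Ioi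
  apply antitoneOn_of_deriv_nonpos hconv
  · intro x hx
    exact (hkey x hx).differentiableAt.continuousAt.continuousWithinAt
  · rw [hint]
    intro x hx
    exact (hkey x hx).differentiableAt.differentiableWithinAt
  · rw [hint]
    intro x hx
    rw [(hkey x hx).deriv]
    have hx0 : (0:ℝ) < x := hx
    have hp : (0:ℝ) < 1 + x := by linarith
    have hq : (0:ℝ) < a + x := by linarith
    have hpq : a + x < 1 + x := by linarith
    set L := Real.log ((1+x)/(a+x)) with hL
    have hL0 : 0 < L := Real.log_pos ((one_lt_div hq).mpr hpq)
    have hLν : L ≤ Real.log ν := by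
      rw [hL]
      apply Real.log_le_log (by positivity)
      rw [div_le_iff₀ hq]
      have : ν * a = 1 := by rw [ha]; field_simp
      nlinarith
    apply div_nonpos_of_nonpos_of_nonneg
    · nlinarith [mul_pos hlogν hx0, mul_pos hL0 hx0]
    · positivity
end

section
/- Let α_i > 0 for i ∈ 𝒳 with α_+ = Σ_{i∈𝒳} α_i, and consider the Dirichlet-multinomial predictor DirM^α(x_{t+1}=i | x_{1:t}) = (n_i^t + α_i)/(t + α_+) with joint probability DirM^α(x_{1:n}) = ∏_{t=0}^{n−1} DirM^α(x_{t+1}|x_{1:t}). Take in the estimator S the constant weights w_i^t = α_i/α_+ and parameter β = α_+. Then for every t ∈ {0,…,n−1} and every i ∈ 𝒳, DirM^α(x_{t+1}=i | x_{1:t}) ≥ S^{α_+}(x_{t+1}=i | x_{1:t}); consequently DirM^α(x_{1:n}) ≥ S^{α_+}(x_{1:n}) and the redundancy satisfies R_DirM^α(x_{1:n}) ≤ R_S^{α_+}(x_{1:n}), where R_Q(x_{1:n}) = ln(n^{−n}∏_{j∈𝒜} n_j^{n_j}) − ln Q(x_{1:n}). -/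
open Finset Real Filter

variable {𝒳 : Type*} [Fintype 𝒳] [DecidableEq 𝒳]

/-- Predictive probability of the Dirichlet-multinomial:
`DirM^α(x_{t+1}=i | x_{1:t}) = (n_i^t + α_i)/(t + α_+)`. -/
noncomputable def DirMpred (x : ℕ → 𝒳) (α : 𝒳 → ℝ) (t : ℕ) (i : 𝒳) : ℝ :=
  ((cnt x i t : ℝ) + α i) / (t + ∑ k, α k)

/-- Joint Dirichlet-multinomial probability `DirM^α(x_{1:n})`. -/
noncomputable def DirMjoint (x : ℕ → 𝒳) (α : 𝒳 → ℝ) (n : ℕ) : ℝ :=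
  ∏ t ∈ Finset.range n, DirMpred x α t (x t)

/-- with weights `w^t_i = α_i/α_+` and `β = α_+`,
the Dirichlet-multinomial dominates `S^{α_+}` pointwise, jointly, and has
smaller redundancy. -/
theorem dirM_ge_S
    (n : ℕ) (hn : 1 ≤ n) (x : ℕ → 𝒳) (α : 𝒳 → ℝ) (hα : ∀ i, 0 < α i) :
    (∀ t ∈ Finset.range n, ∀ i : 𝒳,
        DirMpred x α t i ≥
          Spred x (fun _ i => α i / ∑ k, α k) (fun _ => ∑ k, α k) t i) ∧
    DirMjoint x α n ≥ Sjoint x (fun _ i => α i / ∑ k, α k) (fun _ => ∑ k, α k) n ∧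
    Real.log (((n : ℝ) ^ n)⁻¹ * ∏ j ∈ alph x n, (cnt x j n : ℝ) ^ cnt x j n)
        - Real.log (DirMjoint x α n)
      ≤ Red x (fun _ i => α i / ∑ k, α k) (fun _ => ∑ k, α k) n := by
  have hA : 0 < ∑ k, α k :=
    Finset.sum_pos (fun i _ => hα i) ⟨x 0, Finset.mem_univ _⟩
  have hpos : ∀ t : ℕ, ∀ i : 𝒳,
      0 < Spred x (fun _ i => α i / ∑ k, α k) (fun _ => ∑ k, α k) t i := by
    intro t i
    have hden : (0 : ℝ) < t + ∑ k, α k := by positivity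
    unfold Spred
    split
    · exact div_pos (by exact_mod_cast ‹0 < cnt x i t›) hden
    · have : (∑ k, α k) * (α i / ∑ k, α k) = α i := by
        field_simp
      rw [this]
      exact div_pos (hα i) hden
  have hpt : ∀ t ∈ Finset.range n, ∀ i : 𝒳,
      DirMpred x α t i ≥
        Spred x (fun _ i => α i / ∑ k, α k) (fun _ => ∑ k, α k) t i := by
    intro t _ i
    have hden : (0 : ℝ) < t + ∑ k, α k := by positivity
    unfold DirMpred Spred
    split
    · gcongr
      linarith [(hα i).le]
    · have hz : cnt x i t = 0 := Nat.eq_zero_of_not_pos ‹¬ 0 < cnt x i t›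
      have : (∑ k, α k) * (α i / ∑ k, α k) = α i := by field_simp
      rw [this, hz]
      simp
  have hjoint : DirMjoint x α n ≥
      Sjoint x (fun _ i => α i / ∑ k, α k) (fun _ => ∑ k, α k) n := by
    unfold DirMjoint Sjoint
    exact Finset.prod_le_prod (fun t _ => (hpos t (x t)).le)
      (fun t ht => hpt t ht (x t))
  have hSpos : 0 < Sjoint x (fun _ i => α i / ∑ k, α k) (fun _ => ∑ k, α k) n :=
    Finset.prod_pos fun t _ => hpos t (x t)
  refine ⟨hpt, hjoint, ?_⟩
  unfold Red
  have := Real.log_le_log hSpos hjoint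
  linarith
end

section
/- Let β*_t = m_t / ln((t+1)/m_t) for t ≥ 1 and let β*_0 ∈ (0,∞) be arbitrary. Let c_0, c_1, …, c_{n−1} be reals with 1 ≤ c_t ≤ 2 for all t, and set β_t = β*_t / c_t. Then the redundancies satisfy R_S^{β⃗}(x_{1:n}) ≤ R_S^{β⃗*}(x_{1:n}) + (m − 1)·ln 2. -/
open Finset Real Filter

variable {𝒳 : Type*} [Fintype 𝒳] [DecidableEq 𝒳]

lemma cnt_pos_iff (x : ℕ → 𝒳) (i : 𝒳) (t : ℕ) : 0 < cnt x i t ↔ i ∈ alph x t := by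
  simp [cnt, alph, Finset.card_pos, Finset.filter_nonempty_iff]

lemma alph_card_pos (x : ℕ → 𝒳) {t : ℕ} (ht : 1 ≤ t) : 0 < (alph x t).card :=
  Finset.card_pos.2 ⟨x 0, Finset.mem_image.2 ⟨0, Finset.mem_range.2 ht, rfl⟩⟩

lemma βs_pos (x : ℕ → 𝒳) (βs : ℕ → ℝ) (hβ0 : 0 < βs 0)
    (hβs : ∀ t, 1 ≤ t → βs t = ((alph x t).card : ℝ) / Real.log ((t + 1) / (alph x t).card)) :
    ∀ t, 0 < βs t := by
  intro t
  rcases Nat.eq_zero_or_pos t with h | h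
  · subst h; exact hβ0
  · rw [hβs t h]
    have hm : 0 < (alph x t).card := alph_card_pos x h
    have hmt : (alph x t).card ≤ t := (Finset.card_image_le).trans (by simp)
    refine div_pos (by exact_mod_cast hm) (Real.log_pos ?_)
    rw [one_lt_div (by exact_mod_cast hm)]
    exact_mod_cast Nat.lt_succ_of_le hmt

lemma Spred_pos (x : ℕ → 𝒳) (w : ℕ → 𝒳 → ℝ) (β : ℕ → ℝ) (hβ : ∀ t, 0 < β t)
    (hw : ∀ t i, 0 < w t i) (t : ℕ) (i : 𝒳) : 0 < Spred x w β t i := by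
  have hd : (0:ℝ) < t + β t := add_pos_of_nonneg_of_pos (Nat.cast_nonneg t) (hβ t)
  unfold Spred
  split
  · exact div_pos (by exact_mod_cast ‹0 < cnt x i t›) hd
  · exact div_pos (mul_pos (hβ t) (hw t i)) hd

/-- Appendix E: redundancy of `S^{β⃗^c}` with `β_t = β*_t / c_t`,
`1 ≤ c_t ≤ 2`, exceeds that of `S^{β⃗*}` by at most `(m−1)·ln 2`. -/
theorem red_scaled_betastar
    (n : ℕ) (hn : 1 ≤ n) (x : ℕ → 𝒳) (w : ℕ → 𝒳 → ℝ)
    (hw : ∀ t i, 0 < w t i)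
    (hwsum : ∀ t, ∑ k ∈ Finset.univ \ alph x t, w t k ≤ 1)
    (βs : ℕ → ℝ) (hβ0 : 0 < βs 0)
    (hβs : ∀ t, 1 ≤ t → βs t = ((alph x t).card : ℝ) / Real.log ((t + 1) / (alph x t).card))
    (c : ℕ → ℝ) (hc : ∀ t, 1 ≤ c t ∧ c t ≤ 2) :
    Red x w (fun t => βs t / c t) n ≤
      Red x w βs n + (((alph x n).card : ℝ) - 1) * Real.log 2 := by
  set m := (alph x n).card with hm
  set β' : ℕ → ℝ := fun t => βs t / c t with hβ'
  have hβpos : ∀ t, 0 < βs t := βs_pos x βs hβ0 hβs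
  have hcpos : ∀ t, 0 < c t := fun t => lt_of_lt_of_le zero_lt_one (hc t).1
  have hβ'pos : ∀ t, 0 < β' t := fun t => div_pos (hβpos t) (hcpos t)
  set E := (newTimes x n).erase 0 with hE
  -- termwise bound
  have hterm : ∀ t ∈ Finset.range n,
      Spred x w βs t (x t) ≤ (if t ∈ E then (2:ℝ) else 1) * Spred x w β' t (x t) := by
    intro t ht
    have hβ := hβpos t
    have hγ := hβ'pos t
    have hγβ : β' t ≤ βs t := div_le_self hβ.le (hc t).1
    have hd : (0:ℝ) < t + βs t := add_pos_of_nonneg_of_pos (Nat.cast_nonneg t) hβ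
    have hd' : (0:ℝ) < t + β' t := add_pos_of_nonneg_of_pos (Nat.cast_nonneg t) hγ
    by_cases hcnt : 0 < cnt x (x t) t
    · have hnew : t ∉ newTimes x n := by
        simp only [newTimes, Finset.mem_filter, not_and, not_not]
        intro _; exact (cnt_pos_iff x (x t) t).1 hcnt
      have hEne : t ∉ E := fun h => hnew (Finset.mem_of_mem_erase h)
      simp only [Spred, if_pos hcnt, hEne, if_neg, if_false, one_mul]
      gcongr
    · rcases Nat.eq_zero_or_pos t with h0 | h1
      · subst h0
        have hE0 : (0:ℕ) ∉ E := Finset.notMem_erase 0 _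
        simp only [Spred, if_neg hcnt, hE0, if_false, one_mul, Nat.cast_zero, zero_add]
        rw [mul_div_cancel_left₀ _ hβ.ne', mul_div_cancel_left₀ _ hγ.ne']
      · have hnew : t ∈ newTimes x n := by
          simp only [newTimes, Finset.mem_filter]
          refine ⟨ht, fun hmem => hcnt ((cnt_pos_iff x (x t) t).2 hmem)⟩
        have hEt : t ∈ E := Finset.mem_erase.2 ⟨Nat.one_le_iff_ne_zero.1 h1, hnew⟩
        simp only [Spred, if_neg hcnt, hEt, if_true]
        have hcγ : β' t * c t = βs t := div_mul_cancel₀ _ (hcpos t).ne'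
        rw [mul_div_assoc']
        rw [div_le_div_iff₀ hd hd']
        have hwp := hw t (x t)
        have htn : (0:ℝ) ≤ t := Nat.cast_nonneg t
        nlinarith [mul_nonneg (mul_nonneg hγ.le hwp.le) htn,
          mul_pos (mul_pos hγ hγ) hwp, (hc t).2, hcpos t, hcγ,
          mul_nonneg (mul_nonneg (mul_nonneg hγ.le hγ.le) hwp.le) (sub_nonneg.2 (hc t).2)]
  -- positivity of joints
  have hS : 0 < Sjoint x w βs n :=
    Finset.prod_pos fun t _ => Spred_pos x w βs hβpos hw t (x t)
  have hS' : 0 < Sjoint x w β' n :=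
    Finset.prod_pos fun t _ => Spred_pos x w β' hβ'pos hw t (x t)
  -- cardinality bound
  have hmem0 : (0:ℕ) ∈ newTimes x n := by
    simp [newTimes, alph, Nat.lt_of_lt_of_le Nat.zero_lt_one hn]
  have hcardN : (newTimes x n).card ≤ m := by
    apply Finset.card_le_card_of_injOn x
    · intro t ht
      simp only [Finset.mem_coe, newTimes, Finset.mem_filter, Finset.mem_range] at ht
      exact Finset.mem_image.2 ⟨t, Finset.mem_range.2 ht.1, rfl⟩
    · intro s hs t ht hst
      simp only [Finset.coe_filter, newTimes, Set.mem_setOf_eq, Finset.mem_coe,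
        Finset.mem_filter, Finset.mem_range] at hs ht
      by_contra hne
      rcases lt_or_gt_of_ne hne with h | h
      · exact ht.2 (Finset.mem_image.2 ⟨s, Finset.mem_range.2 h, hst⟩)
      · exact hs.2 (Finset.mem_image.2 ⟨t, Finset.mem_range.2 h, hst.symm⟩)
  have hcardE : E.card ≤ m - 1 := by
    rw [hE, Finset.card_erase_of_mem hmem0]
    omega
  have hm1 : 1 ≤ m := alph_card_pos x hn
  -- product bound
  have hESub : E ⊆ Finset.range n := fun t ht =>
    (Finset.mem_filter.1 (Finset.mem_of_mem_erase ht)).1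
  have hprod : Sjoint x w βs n ≤ (2:ℝ) ^ (m - 1) * Sjoint x w β' n := by
    calc Sjoint x w βs n
        ≤ ∏ t ∈ Finset.range n, (if t ∈ E then (2:ℝ) else 1) * Spred x w β' t (x t) := by
          apply Finset.prod_le_prod
          · intro t ht; exact (Spred_pos x w βs hβpos hw t (x t)).le
          · exact hterm
      _ = (∏ t ∈ Finset.range n, (if t ∈ E then (2:ℝ) else 1)) * Sjoint x w β' n := by
          rw [Finset.prod_mul_distrib]; rfl
      _ = (2:ℝ) ^ E.card * Sjoint x w β' n := by
          congr 1
          rw [Finset.prod_ite, Finset.prod_const, Finset.prod_const, one_pow, mul_one,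
            Finset.filter_mem_eq_inter, Finset.inter_eq_right.2 hESub]
      _ ≤ (2:ℝ) ^ (m - 1) * Sjoint x w β' n := by
          apply mul_le_mul_of_nonneg_right _ hS'.le
          exact pow_le_pow_right₀ one_le_two hcardE
  -- take logs
  have hlog : Real.log (Sjoint x w βs n) ≤
      Real.log (Sjoint x w β' n) + ((m:ℝ) - 1) * Real.log 2 := by
    have h1 : Real.log (Sjoint x w βs n) ≤ Real.log ((2:ℝ) ^ (m - 1) * Sjoint x w β' n) :=
      Real.log_le_log hS hprod
    rw [Real.log_mul (by positivity) hS'.ne', Real.log_pow] at h1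
    have hcast : ((m - 1 : ℕ) : ℝ) = (m:ℝ) - 1 := by
      push_cast [Nat.cast_sub hm1]; ring
    rw [hcast] at h1
    linarith
  simp only [Red]
  linarith
end

section
/- With β_n = 1/ln n, lim_{n→∞} [ ln(ln n) + ln Γ(n + β_n) − ln Γ(n) − ln Γ(β_n) ] = 1. Equivalently, for the constant sequence x_1 = ⋯ = x_n = j (so m = 1 and n_j = n) with optimal parameter β* = 1/ln n, the redundancy of S^{β*} converges to CL_w(j) + 1 as n → ∞. -/
open Filter Real Set

private lemma aux_ev : ∀ᶠ n : ℝ in atTop, 1 < Real.log n ∧ 2 < n := by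
  filter_upwards [eventually_gt_atTop (Real.exp 2)] with n hn
  have h2 : (2:ℝ) < Real.exp 2 := by
    have := Real.add_one_lt_exp (x := 2) (by norm_num)
    linarith
  refine ⟨?_, lt_trans h2 hn⟩
  have : Real.log (Real.exp 2) < Real.log n :=
    Real.log_lt_log (Real.exp_pos 2) hn
  rw [Real.log_exp] at this; linarith

private lemma aux_invlog : Tendsto (fun n : ℝ => (Real.log n)⁻¹) atTop (nhds 0) :=
  tendsto_inv_atTop_zero.comp Real.tendsto_log_atTop

private lemma aux_low : Tendsto (fun n : ℝ => Real.log (n - 1) / Real.log n) atTop (nhds 1) := by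
  have h1 : Tendsto (fun n : ℝ => (n - 1) / n) atTop (nhds 1) := by
    have h : Tendsto (fun n : ℝ => 1 - n⁻¹) atTop (nhds (1 - 0)) :=
      tendsto_const_nhds.sub tendsto_inv_atTop_zero
    rw [sub_zero] at h
    refine h.congr' ?_
    filter_upwards [eventually_gt_atTop (0:ℝ)] with n hn
    field_simp
  have hlog0 : Tendsto (fun n : ℝ => Real.log ((n - 1) / n)) atTop (nhds 0) := by
    have := (Real.continuousAt_log one_ne_zero).tendsto.comp h1
    simpa [Function.comp_def] using this
  have hmul : Tendsto (fun n : ℝ => Real.log ((n - 1) / n) * (Real.log n)⁻¹ + 1)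
      atTop (nhds (0 * 0 + 1)) := (hlog0.mul aux_invlog).add tendsto_const_nhds
  rw [show (0:ℝ) * 0 + 1 = 1 by norm_num] at hmul
  refine hmul.congr' ?_
  filter_upwards [aux_ev] with n ⟨hl, hn⟩
  have hn1 : n - 1 ≠ 0 := by linarith
  have hn0 : n ≠ 0 := by linarith
  have hlne : Real.log n ≠ 0 := by linarith
  rw [Real.log_div hn1 hn0]
  field_simp
  ring

private lemma aux_diff :
    Tendsto (fun n : ℝ => Real.log (Real.Gamma (n + 1 / Real.log n))
      - Real.log (Real.Gamma n)) atTop (nhds 1) := by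
  refine tendsto_of_tendsto_of_tendsto_of_le_of_le' aux_low tendsto_const_nhds ?_ ?_
  · -- lower bound
    filter_upwards [aux_ev] with n ⟨hl, hn⟩
    set β := 1 / Real.log n with hβ
    have hlpos : 0 < Real.log n := by linarith
    have hβpos : 0 < β := by positivity
    have hβlt : β < 1 := by
      rw [hβ, div_lt_one hlpos]; exact hl
    have hmem1 : n - 1 ∈ Ioi (0:ℝ) := by simp; linarith
    have hmem2 : n ∈ Ioi (0:ℝ) := by simp; linarith
    have hmem3 : n + β ∈ Ioi (0:ℝ) := by simp; linarith
    have hsec := Real.convexOn_log_Gamma.secant_mono (a := n) (x := n - 1) (y := n + β)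
      hmem2 hmem1 hmem3 (by intro h; linarith [sub_one_lt n])
      (by intro h; nlinarith) (by linarith)
    simp only [Function.comp] at hsec
    have e1 : n - 1 - n = -1 := by ring
    have e2 : n + β - n = β := by ring
    rw [e1, e2] at hsec
    have hΓ : Real.Gamma n = (n - 1) * Real.Gamma (n - 1) := by
      have := Real.Gamma_add_one (s := n - 1) (by intro h; linarith)
      rw [sub_add_cancel] at this
      exact this
    have hlogΓ : Real.log (Real.Gamma n)
        = Real.log (n - 1) + Real.log (Real.Gamma (n - 1)) := by
      rw [hΓ, Real.log_mul (by intro h; linarith)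
        (Real.Gamma_pos_of_pos (by linarith : (0:ℝ) < n - 1)).ne']
    have h2 : Real.log (n - 1)
        ≤ (Real.log (Real.Gamma (n + β)) - Real.log (Real.Gamma n)) / β := by
      have : (Real.log (Real.Gamma (n - 1)) - Real.log (Real.Gamma n)) / (-1)
          = Real.log (n - 1) := by rw [hlogΓ]; ring
      linarith [hsec, this.symm ▸ hsec]
    rw [div_le_iff₀ hlpos] at *
    calc Real.log (n - 1) = Real.log (n - 1) * 1 := by ring
      _ ≤ (Real.log (Real.Gamma (n + β)) - Real.log (Real.Gamma n)) / β := by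
          rw [mul_one]; exact h2
      _ = (Real.log (Real.Gamma (n + β)) - Real.log (Real.Gamma n)) * Real.log n := by
          rw [hβ]; field_simp
  · -- upper bound
    filter_upwards [aux_ev] with n ⟨hl, hn⟩
    set β := 1 / Real.log n with hβ
    have hlpos : 0 < Real.log n := by linarith
    have hβpos : 0 < β := by positivity
    have hβlt : β < 1 := by rw [hβ, div_lt_one hlpos]; exact hl
    have hmem2 : n ∈ Ioi (0:ℝ) := by simp; linarith
    have hmem3 : n + β ∈ Ioi (0:ℝ) := by simp; linarith
    have hmem4 : n + 1 ∈ Ioi (0:ℝ) := by simp; linarith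
    have hsec := Real.convexOn_log_Gamma.secant_mono (a := n) (x := n + β) (y := n + 1)
      hmem2 hmem3 hmem4 (by intro h; nlinarith) (by intro h; linarith [lt_add_one n])
      (by linarith)
    simp only [Function.comp] at hsec
    have e2 : n + β - n = β := by ring
    have e3 : n + 1 - n = 1 := by ring
    rw [e2, e3] at hsec
    have hΓ : Real.Gamma (n + 1) = n * Real.Gamma n :=
      Real.Gamma_add_one (by intro h; linarith)
    have hlogΓ : Real.log (Real.Gamma (n + 1))
        = Real.log n + Real.log (Real.Gamma n) := by
      rw [hΓ, Real.log_mul (by linarith)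
        (Real.Gamma_pos_of_pos (by linarith : (0:ℝ) < n)).ne']
    rw [div_one, hlogΓ] at hsec
    have h2 : (Real.log (Real.Gamma (n + β)) - Real.log (Real.Gamma n)) / β
        ≤ Real.log n := by linarith
    rw [div_le_iff₀ hβpos] at h2
    have : β * Real.log n = 1 := by rw [hβ]; field_simp
    nlinarith

private lemma aux_small :
    Tendsto (fun n : ℝ => Real.log (Real.log n)
      - Real.log (Real.Gamma (1 / Real.log n))) atTop (nhds 0) := by
  have h1 : Tendsto (fun n : ℝ => 1 + (Real.log n)⁻¹) atTop (nhds (1 + 0)) :=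
    tendsto_const_nhds.add aux_invlog
  rw [add_zero] at h1
  have hcont : ContinuousAt Real.Gamma 1 := by
    refine (Real.differentiableAt_Gamma fun m => ?_).continuousAt
    have hm : (0:ℝ) ≤ m := Nat.cast_nonneg m
    intro h
    linarith
  have h2 : Tendsto (fun n : ℝ => Real.Gamma (1 + (Real.log n)⁻¹)) atTop
      (nhds 1) := by
    have := hcont.tendsto.comp h1
    rwa [Real.Gamma_one] at this
  have h3 : Tendsto (fun n : ℝ => -Real.log (Real.Gamma (1 + (Real.log n)⁻¹)))
      atTop (nhds 0) := by
    have := ((Real.continuousAt_log one_ne_zero).tendsto.comp h2).neg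
    simpa using this
  refine h3.congr' ?_
  filter_upwards [aux_ev] with n ⟨hl, hn⟩
  have hlpos : 0 < Real.log n := by linarith
  have hβpos : 0 < 1 / Real.log n := by positivity
  have hΓ : Real.Gamma (1 / Real.log n + 1)
      = (1 / Real.log n) * Real.Gamma (1 / Real.log n) :=
    Real.Gamma_add_one hβpos.ne'
  have : Real.log (Real.Gamma (1 + (Real.log n)⁻¹))
      = -Real.log (Real.log n) + Real.log (Real.Gamma (1 / Real.log n)) := by
    rw [show (1:ℝ) + (Real.log n)⁻¹ = 1 / Real.log n + 1 by rw [one_div]; ring,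
      hΓ, Real.log_mul hβpos.ne' (Real.Gamma_pos_of_pos hβpos).ne',
      one_div, Real.log_inv]
  rw [this]; ring

/-- with `β_n = 1/ln n`,
`ln ln n + ln Γ(n+β_n) − ln Γ(n) − ln Γ(β_n) → 1` as `n → ∞`; equivalently, on
the constant sequence `x_1 = ⋯ = x_n = j` (where
`S^β(x_{1:n}) = w_j^0 · Γ(β)Γ(n)β/Γ(n+β)` and the maximum i.i.d. likelihood is 1)
the redundancy of `S^{β*}` with `β* = 1/ln n` converges to `CL_w(j) + 1`. -/
theorem constant_sequence_redundancy_limit :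
    Tendsto
      (fun n : ℝ =>
        Real.log (Real.log n) + Real.log (Real.Gamma (n + 1 / Real.log n))
          - Real.log (Real.Gamma n) - Real.log (Real.Gamma (1 / Real.log n)))
      atTop (nhds 1) ∧
    ∀ w0 : ℝ, 0 < w0 →
      Tendsto
        (fun n : ℝ =>
          -Real.log (w0 * Real.Gamma (1 / Real.log n) * Real.Gamma n *
              (1 / Real.log n) / Real.Gamma (n + 1 / Real.log n)))
        atTop (nhds (Real.log (1 / w0) + 1)) := by
  have part1 : Tendsto
      (fun n : ℝ =>
        Real.log (Real.log n) + Real.log (Real.Gamma (n + 1 / Real.log n))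
          - Real.log (Real.Gamma n) - Real.log (Real.Gamma (1 / Real.log n)))
      atTop (nhds 1) := by
    have := aux_small.add aux_diff
    rw [zero_add] at this
    refine this.congr fun n => ?_
    ring
  refine ⟨part1, fun w0 hw0 => ?_⟩
  have h := (tendsto_const_nhds (x := Real.log (1 / w0)) (f := atTop)).add part1
  refine h.congr' ?_
  filter_upwards [aux_ev] with n ⟨hl, hn⟩
  have hlpos : 0 < Real.log n := by linarith
  have hβpos : 0 < 1 / Real.log n := by positivity
  have hΓβ : 0 < Real.Gamma (1 / Real.log n) := Real.Gamma_pos_of_pos hβpos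
  have hΓn : 0 < Real.Gamma n := Real.Gamma_pos_of_pos (by linarith)
  have hΓnβ : 0 < Real.Gamma (n + 1 / Real.log n) :=
    Real.Gamma_pos_of_pos (by linarith)
  rw [Real.log_div (by positivity) hΓnβ.ne', Real.log_mul (by positivity) hβpos.ne',
    Real.log_mul (by positivity) hΓn.ne', Real.log_mul hw0.ne' hΓβ.ne',
    one_div (Real.log n), Real.log_inv, one_div w0, Real.log_inv]
  ring
end
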